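/- The moments μ_n = L(x^n) of the linear functional L associated with the monic three-term recurrence equal the sum over Motzkin paths from (0,0) to (n,0) of the product of edge weights, where an H edge at height j has weight b_j, a D edge starting at height j has weight λ_j, and a U edge has weight 1 (Viennot's theorem). -/

import Mathlib

/-- Steps of a Motzkin path: horizontal, up, down. -/
inductive Step | H | U | D
deriving DecidableEq, Inhabited, Repr

instance : Fintype Step where
  elems := {Step.H, Step.U, Step.D}
  complete := by intro x; cases x <;> simp

/-- Vertical displacement of a step. -/
def Step.d : Step → ℤ
  | .H => 0
  | .U => 1
  | .D => -1

/-- Height after `i` steps of the length-`k` path `f`, starting at height `m`. -/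
def htF {k : ℕ} (m : ℕ) (f : Fin k → Step) (i : ℕ) : ℤ :=
  (m : ℤ) + (((List.ofFn f).take i).map Step.d).sum

/-- `f` is a Motzkin path from `(0, m)` to `(k, n)` staying at or above the x-axis. -/
def IsMotzkinF {k : ℕ} (m n : ℕ) (f : Fin k → Step) : Prop :=
  htF m f k = n ∧ ∀ i ≤ k, 0 ≤ htF m f i

instance {k : ℕ} (m n : ℕ) : DecidablePred (IsMotzkinF (k := k) m n) := fun _ => by
  unfold IsMotzkinF; infer_instance
open Polynomial

/-- Monic orthogonal polynomials: `p 0 = 1`, `p 1 = x - b 0`,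
`p (n+1) = (x - b n) * p n - lam n * p (n-1)` (with `p_{-1} = 0`). -/
noncomputable def recP (b lam : ℕ → ℝ) : ℕ → Polynomial ℝ
  | 0 => 1
  | 1 => X - C (b 0)
  | n + 2 => (X - C (b (n + 1))) * recP b lam (n + 1) - C (lam (n + 1)) * recP b lam n

/-- Viennot's weight of an edge starting at height `j`: `b j` for H, `1` for U,
`lam j` for D. -/
noncomputable def edgeV (b lam : ℕ → ℝ) {k : ℕ} (f : Fin k → Step) (i : Fin k) : ℝ :=
  let j : ℕ := (htF 0 f i).toNat
  match f i with
  | Step.H => b j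
  | Step.U => 1
  | Step.D => lam j



noncomputable def edgeW (b lam : ℕ → ℝ) (m : ℕ) {k : ℕ} (f : Fin k → Step) (i : Fin k) : ℝ :=
  match f i with
  | Step.H => b (htF m f i).toNat
  | Step.U => 1
  | Step.D => lam (htF m f i).toNat

noncomputable def SV (b lam : ℕ → ℝ) (n m : ℕ) : ℝ :=
  ∑ f ∈ Finset.univ.filter (fun f : Fin n → Step => IsMotzkinF m 0 f),
    ∏ i : Fin n, edgeW b lam m f i

lemma edgeV_eq_edgeW (b lam : ℕ → ℝ) {k : ℕ} (f : Fin k → Step) (i : Fin k) :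
    edgeV b lam f i = edgeW b lam 0 f i := by
  unfold edgeV edgeW; cases f i <;> rfl

lemma htF_zero {k : ℕ} (m : ℕ) (f : Fin k → Step) : htF m f 0 = m := by
  simp [htF]

lemma ofFn_cons {n : ℕ} (s : Step) (g : Fin n → Step) :
    List.ofFn (Fin.cons s g : Fin (n+1) → Step) = s :: List.ofFn g := by
  rw [List.ofFn_succ]
  simp

lemma htF_cons {n : ℕ} (s : Step) (g : Fin n → Step) (m m' : ℕ)
    (h : (m : ℤ) + s.d = m') (i : ℕ) :
    htF m (Fin.cons s g) (i + 1) = htF m' g i := by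
  unfold htF
  rw [ofFn_cons, List.take_succ_cons]
  simp only [List.map_cons, List.sum_cons]
  -- arithmetic
  linarith

lemma motz_cons {n : ℕ} (s : Step) (g : Fin n → Step) (m m' : ℕ)
    (h : (m : ℤ) + s.d = m') :
    IsMotzkinF m 0 (Fin.cons s g) ↔ IsMotzkinF m' 0 g := by
  unfold IsMotzkinF
  constructor
  · rintro ⟨he, hp⟩
    refine ⟨by rw [← htF_cons s g m m' h]; exact he, fun i hi => ?_⟩
    rw [← htF_cons s g m m' h]
    exact hp (i+1) (by omega)
  · rintro ⟨he, hp⟩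
    refine ⟨by rw [htF_cons s g m m' h]; exact he, fun i hi => ?_⟩
    match i with
    | 0 => rw [htF_zero]; positivity
    | j + 1 => rw [htF_cons s g m m' h]; exact hp j (by omega)

lemma motz_cons_D0 {n : ℕ} (g : Fin n → Step) : ¬ IsMotzkinF 0 0 (Fin.cons Step.D g) := by
  rintro ⟨-, hp⟩
  have := hp 1 (by omega)
  unfold htF at this
  rw [ofFn_cons, List.take_succ_cons, List.take_zero] at this
  simp [Step.d] at this

lemma edgeW_cons {n : ℕ} (b lam : ℕ → ℝ) (s : Step) (g : Fin n → Step) (m m' : ℕ)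
    (h : (m : ℤ) + s.d = m') (i : Fin n) :
    edgeW b lam m (Fin.cons s g) i.succ = edgeW b lam m' g i := by
  unfold edgeW
  have hc : (Fin.cons s g : Fin (n+1) → Step) i.succ = g i := by simp
  have hh : htF m (Fin.cons s g) (i.succ : ℕ) = htF m' g i := by
    have : ((i.succ : Fin (n+1)) : ℕ) = (i : ℕ) + 1 := rfl
    rw [this, htF_cons s g m m' h]
  rw [hc, hh]

lemma prod_edgeW_cons {n : ℕ} (b lam : ℕ → ℝ) (s : Step) (g : Fin n → Step) (m m' : ℕ)
    (h : (m : ℤ) + s.d = m') :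
    ∏ i : Fin (n+1), edgeW b lam m (Fin.cons s g) i
      = edgeW b lam m (Fin.cons s g) 0 * ∏ i : Fin n, edgeW b lam m' g i := by
  rw [Fin.prod_univ_succ]
  congr 1
  exact Finset.prod_congr rfl fun i _ => edgeW_cons b lam s g m m' h i

lemma edgeW_cons_zero (b lam : ℕ → ℝ) {n : ℕ} (s : Step) (g : Fin n → Step) (m : ℕ) :
    edgeW b lam m (Fin.cons s g) 0
      = match s with | Step.H => b m | Step.U => 1 | Step.D => lam m := by
  unfold edgeW
  have h0 : ((0 : Fin (n+1)) : ℕ) = 0 := rfl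
  rw [Fin.cons_zero]
  cases s <;> simp [h0, htF_zero]

lemma step_univ : (Finset.univ : Finset Step) = {Step.H, Step.U, Step.D} := by
  decide

lemma SV_zero (b lam : ℕ → ℝ) (m : ℕ) : SV b lam 0 m = if m = 0 then 1 else 0 := by
  unfold SV
  have : (Finset.univ : Finset (Fin 0 → Step)) = {Fin.elim0} := by
    apply Finset.eq_singleton_iff_unique_mem.2
    exact ⟨Finset.mem_univ _, fun f _ => funext fun i => i.elim0⟩
  rw [this]
  by_cases hm : m = 0
  · subst hm
    rw [Finset.filter_singleton, if_pos]
    · simp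
    · exact ⟨by simp [htF], fun i hi => by interval_cases i; simp [htF]⟩
  · rw [Finset.filter_singleton, if_neg]
    · simp [hm]
    · rintro ⟨he, -⟩
      rw [htF_zero] at he
      exact hm (by exact_mod_cast he)

noncomputable def stw (b lam : ℕ → ℝ) (m : ℕ) : Step → ℝ
  | .H => b m
  | .U => 1
  | .D => lam m

lemma sum_step (F : Step → ℝ) : ∑ s : Step, F s = F .H + F .U + F .D := by
  rw [step_univ, Finset.sum_insert (by decide), Finset.sum_insert (by decide),
    Finset.sum_singleton, ← add_assoc]

lemma SV_succ_aux (b lam : ℕ → ℝ) (n m : ℕ) :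
    SV b lam (n+1) m = ∑ s : Step, ∑ g : Fin n → Step,
      (if IsMotzkinF m 0 (Fin.cons s g) then
        ∏ i : Fin (n+1), edgeW b lam m (Fin.cons s g) i else 0) := by
  unfold SV
  rw [Finset.sum_filter, ← Equiv.sum_comp (Fin.consEquiv fun _ => Step), Fintype.sum_prod_type]
  rfl

lemma innerSumW (b lam : ℕ → ℝ) {n : ℕ} (s : Step) (m m' : ℕ) (h : (m : ℤ) + s.d = m') :
    ∑ g : Fin n → Step,
      (if IsMotzkinF m 0 (Fin.cons s g) then
        ∏ i : Fin (n+1), edgeW b lam m (Fin.cons s g) i else 0)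
    = stw b lam m s * SV b lam n m' := by
  unfold SV
  rw [Finset.sum_filter, Finset.mul_sum]
  refine Finset.sum_congr rfl fun g _ => ?_
  by_cases hg : IsMotzkinF m' 0 g
  · rw [if_pos ((motz_cons s g m m' h).2 hg), if_pos hg,
      prod_edgeW_cons b lam s g m m' h, edgeW_cons_zero]
    cases s <;> rfl
  · rw [if_neg (fun hc => hg ((motz_cons s g m m' h).1 hc)), if_neg hg, mul_zero]

lemma innerSumW_D0 (b lam : ℕ → ℝ) {n : ℕ} :
    ∑ g : Fin n → Step,
      (if IsMotzkinF 0 0 (Fin.cons Step.D g) then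
        ∏ i : Fin (n+1), edgeW b lam 0 (Fin.cons Step.D g) i else 0) = 0 := by
  refine Finset.sum_eq_zero fun g _ => if_neg (motz_cons_D0 g)

lemma SV_succ_zero (b lam : ℕ → ℝ) (n : ℕ) :
    SV b lam (n+1) 0 = b 0 * SV b lam n 0 + SV b lam n 1 := by
  rw [SV_succ_aux, sum_step, innerSumW b lam Step.H 0 0 (by simp [Step.d]),
    innerSumW b lam Step.U 0 1 (by simp [Step.d]), innerSumW_D0]
  show b 0 * _ + 1 * _ + 0 = _
  ring

lemma SV_succ_pos (b lam : ℕ → ℝ) (n m : ℕ) :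
    SV b lam (n+1) (m+1) = b (m+1) * SV b lam n (m+1) + SV b lam n (m+2)
      + lam (m+1) * SV b lam n m := by
  rw [SV_succ_aux, sum_step, innerSumW b lam Step.H (m+1) (m+1) (by simp [Step.d]),
    innerSumW b lam Step.U (m+1) (m+2) (by simp only [Step.d]; push_cast; ring),
    innerSumW b lam Step.D (m+1) m (by simp only [Step.d]; push_cast; ring)]
  show b (m+1) * _ + 1 * _ + lam (m+1) * _ = _
  ring

lemma X_mul_recP_zero (b lam : ℕ → ℝ) :
    X * recP b lam 0 = recP b lam 1 + C (b 0) * recP b lam 0 := by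
  show X * 1 = (X - C (b 0)) + C (b 0) * 1
  ring

lemma X_mul_recP_succ (b lam : ℕ → ℝ) (m : ℕ) :
    X * recP b lam (m+1) = recP b lam (m+2) + C (b (m+1)) * recP b lam (m+1)
      + C (lam (m+1)) * recP b lam m := by
  have h2 : recP b lam (m+2)
      = (X - C (b (m+1))) * recP b lam (m+1) - C (lam (m+1)) * recP b lam m := rfl
  rw [h2]; ring

lemma L_C_mul (L : Polynomial ℝ →ₗ[ℝ] ℝ) (a : ℝ) (p q : Polynomial ℝ) :
    L (q * (C a * p)) = a * L (q * p) := by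
  rw [show q * (C a * p) = a • (q * p) by rw [Polynomial.smul_eq_C_mul]; ring,
    map_smul, smul_eq_mul]

lemma keyV (b lam : ℕ → ℝ) (L : Polynomial ℝ →ₗ[ℝ] ℝ)
    (hL1 : L 1 = 1) (hL : ∀ j ≥ 1, L (recP b lam j) = 0) :
    ∀ n m, L (X ^ n * recP b lam m) = SV b lam n m := by
  intro n
  induction n with
  | zero =>
    intro m
    rw [pow_zero, one_mul, SV_zero]
    cases m with
    | zero => simpa [recP] using hL1
    | succ k => rw [if_neg (by omega)]; exact hL (k+1) (by omega)
  | succ n ih =>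
    intro m
    rw [show X ^ (n+1) * recP b lam m = X ^ n * (X * recP b lam m) from by ring]
    cases m with
    | zero =>
      rw [X_mul_recP_zero, mul_add, map_add, L_C_mul, ih 1, ih 0, SV_succ_zero]
      ring
    | succ k =>
      rw [X_mul_recP_succ, mul_add, mul_add, map_add, map_add, L_C_mul, L_C_mul,
        ih (k+2), ih (k+1), ih k, SV_succ_pos]
      ring


/-- Viennot's theorem: the moments `μ_n = L(x^n)` equal the sum over
Motzkin paths from `(0,0)` to `(n,0)` of the products of the edge weights. -/
theorem stmt_16 (b lam : ℕ → ℝ) (L : Polynomial ℝ →ₗ[ℝ] ℝ)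
    (hL1 : L 1 = 1) (hL : ∀ j ≥ 1, L (recP b lam j) = 0) (n : ℕ) :
    L (X ^ n) =
      ∑ f ∈ Finset.univ.filter (fun f : Fin n → Step => IsMotzkinF 0 0 f),
        ∏ i : Fin n, edgeV b lam f i := by
  have h := keyV b lam L hL1 hL n 0
  rw [show X ^ n * recP b lam 0 = X ^ n from by show X ^ n * 1 = X ^ n; ring] at h
  rw [h]
  exact Finset.sum_congr rfl fun f _ => Finset.prod_congr rfl fun i _ =>
    (edgeV_eq_edgeW b lam f i).symm
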